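/- arXiv:1404.6915 — 2 statements merged into one kernel-verified Lean document; each statement's English description precedes it below -/
import Mathlib

section
/- With the notation of the Beltrami flow construction, the average of W ⊗ W over the torus equals (1/2) Σ_{|k|=λ̄} |a_k|² (Id − (k/|k|) ⊗ (k/|k|)). -/
/-!
Expanding `W ⊗ W` as a double sum over `Λ × Λ` and integrating, the orthogonality of the
characters `e^{i k·ξ}` on `[0, 2π]³` keeps only the pairs `(k, -k)`. Pairing `k` with `-k`, and
using `a_{-k} = conj a_k` and `B_{-k} = A_k - i n × A_k` with `n = k/|k|`, each pair contributes
`2 |a_k|² (A ⊗ A + (n × A) ⊗ (n × A))`. Since `√2 A`, `√2 n × A`, `n` is an orthonormal frame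
of `ℝ³`, the completeness relation turns this into `|a_k|² (Id - n ⊗ n)`.
-/

open MeasureTheory Matrix

noncomputable def torusChar {ι : Type*} [Fintype ι] (k : ι → ℤ) (ξ : ι → ℝ) : ℂ :=
  Complex.exp (Complex.I * ((∑ j, (k j : ℝ) * ξ j : ℝ) : ℂ))

section torusChar

variable {ι : Type*} [Fintype ι]

lemma torusChar_eq_prod (k : ι → ℤ) (ξ : ι → ℝ) :
    torusChar k ξ = ∏ j, Complex.exp (Complex.I * (k j * ξ j)) := by
  rw [torusChar, ← Complex.exp_sum, Complex.ofReal_sum, Finset.mul_sum]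
  push_cast
  rfl

lemma torusChar_add (k k' : ι → ℤ) (ξ : ι → ℝ) :
    torusChar (k + k') ξ = torusChar k ξ * torusChar k' ξ := by
  simp only [torusChar_eq_prod, ← Finset.prod_mul_distrib, ← Complex.exp_add, Pi.add_apply]
  push_cast
  simp only [add_mul, mul_add]

lemma continuous_torusChar (k : ι → ℤ) : Continuous (torusChar k) := by
  unfold torusChar
  fun_prop

lemma integral_exp_int_mul_Icc (m : ℤ) :
    ∫ x in Set.Icc (0 : ℝ) (2 * Real.pi), Complex.exp (Complex.I * (m * x))
      = if m = 0 then ((2 * Real.pi : ℝ) : ℂ) else 0 := by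
  rw [integral_Icc_eq_integral_Ioc, ← intervalIntegral.integral_of_le (by positivity)]
  split_ifs with hm
  · simp [hm]
  · have hc : Complex.I * m ≠ 0 := by simp [hm]
    simp_rw [← mul_assoc]
    have hper : Complex.exp (Complex.I * m * ((2 * Real.pi : ℝ) : ℂ)) = 1 := by
      rw [← Complex.exp_int_mul_two_pi_mul_I m]
      push_cast
      ring_nf
    rw [integral_exp_mul_complex hc, hper]
    simp

lemma setIntegral_torusChar_Icc (k : ι → ℤ) :
    ∫ ξ in Set.Icc 0 (fun _ => 2 * Real.pi), torusChar k ξ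
      = if k = 0 then (((2 * Real.pi) ^ Fintype.card ι : ℝ) : ℂ) else 0 := by
  rw [← Set.pi_univ_Icc, volume_pi, Measure.restrict_pi_pi]
  simp_rw [torusChar_eq_prod]
  rw [integral_fintype_prod_eq_prod (fun j (x : ℝ) => Complex.exp (Complex.I * (k j * x)))]
  simp only [Pi.zero_apply, integral_exp_int_mul_Icc]
  split_ifs with hk
  · simp [hk]
  · obtain ⟨j, hj⟩ := Function.ne_iff.mp hk
    exact Finset.prod_eq_zero (Finset.mem_univ j) (if_neg hj)

end torusChar

lemma setIntegral_sum_mul_sum_torusChar {ι : Type*} [Fintype ι] {Λ : Finset (ι → ℤ)}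
    (hΛ : ∀ k ∈ Λ, -k ∈ Λ) (c d : (ι → ℤ) → ℂ) :
    ∫ ξ in Set.Icc 0 (fun _ => 2 * Real.pi),
        (∑ k ∈ Λ, c k * torusChar k ξ) * (∑ k ∈ Λ, d k * torusChar k ξ)
      = (((2 * Real.pi) ^ Fintype.card ι : ℝ) : ℂ) * ∑ k ∈ Λ, c k * d (-k) := by
  have hint : ∀ k k' : ι → ℤ, IntegrableOn (fun ξ => c k * d k' * torusChar (k + k') ξ)
      (Set.Icc 0 (fun _ => 2 * Real.pi)) :=
    fun k k' => (continuous_const.mul (continuous_torusChar _)).integrableOn_Icc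
  simp_rw [Finset.sum_mul_sum, mul_mul_mul_comm, ← torusChar_add]
  rw [integral_finsetSum _ fun k _ => integrable_finsetSum _ fun k' _ => hint k k',
    Finset.mul_sum]
  refine Finset.sum_congr rfl fun k hk => ?_
  simp_rw [integral_finsetSum _ fun k' _ => hint k k', integral_const_mul,
    setIntegral_torusChar_Icc, add_eq_zero_iff_neg_eq, mul_ite, mul_zero,
    Finset.sum_ite_eq, if_pos (hΛ k hk)]
  ring

lemma Finset.sum_comp_neg_of_neg_mem {G M : Type*} [AddGroup G] [AddCommMonoid M]
    {s : Finset G} (hs : ∀ x ∈ s, -x ∈ s) (f : G → M) :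
    ∑ x ∈ s, f (-x) = ∑ x ∈ s, f x :=
  Finset.sum_equiv (Equiv.neg G) (fun x => ⟨hs x, fun h => by simpa using hs _ h⟩)
    (fun _ _ => rfl)

lemma dotProduct_self_eq_of_sqrt_eq {ι : Type*} [Fintype ι] {v : ι → ℝ} {r : ℝ}
    (h : Real.sqrt (∑ i, v i ^ 2) = r) : v ⬝ᵥ v = r ^ 2 := by
  rw [← h, Real.sq_sqrt (Finset.sum_nonneg fun i _ => sq_nonneg (v i))]
  simp only [dotProduct, sq]

lemma orthonormal_cross_frame_completeness {n u : Fin 3 → ℝ} (hn : n ⬝ᵥ n = 1)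
    (hu : u ⬝ᵥ u = 1) (hnu : n ⬝ᵥ u = 0) (i j : Fin 3) :
    u i * u j + (n ⨯₃ u) i * (n ⨯₃ u) j + n i * n j = if i = j then 1 else 0 := by
  let M : Matrix (Fin 3) (Fin 3) ℝ := ![u, n ⨯₃ u, n]
  have hrows : M * Mᵀ = 1 := by
    have hun : u ⬝ᵥ n = 0 := by rw [dotProduct_comm, hnu]
    have hcross : (n ⨯₃ u) ⬝ᵥ (n ⨯₃ u) = 1 := by
      rw [cross_dot_cross, hn, hu, hnu, hun]; norm_num
    have hcu : (n ⨯₃ u) ⬝ᵥ u = 0 := by rw [dotProduct_comm, dot_cross_self]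
    have hcn : (n ⨯₃ u) ⬝ᵥ n = 0 := by rw [dotProduct_comm, dot_self_cross]
    ext p q
    change M p ⬝ᵥ M q = (1 : Matrix (Fin 3) (Fin 3) ℝ) p q
    fin_cases p <;> fin_cases q <;>
      simp [M, hu, hn, hun, hnu, hcross, hcu, hcn, dot_self_cross, dot_cross_self]
  have hcols : (Mᵀ * M) i j = (1 : Matrix (Fin 3) (Fin 3) ℝ) i j := by
    rw [mul_eq_one_comm.mp hrows]
  rw [Matrix.mul_apply, Fin.sum_univ_three, Matrix.one_apply] at hcols
  exact hcols

noncomputable def beltramiVector (n A : Fin 3 → ℝ) (i : Fin 3) : ℂ :=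
  A i + Complex.I * ((n ⨯₃ A) i : ℝ)

lemma beltramiVector_mul_add_mul_neg {n A : Fin 3 → ℝ} (hn : n ⬝ᵥ n = 1)
    (hA : A ⬝ᵥ A = 1 / 2) (hnA : n ⬝ᵥ A = 0) (i j : Fin 3) :
    beltramiVector n A i * beltramiVector (-n) A j + beltramiVector (-n) A i * beltramiVector n A j
      = (if i = j then 1 else 0) - ((n i * n j : ℝ) : ℂ) := by
  have hsqrt2 : Real.sqrt 2 ^ 2 = 2 := Real.sq_sqrt zero_le_two
  have hframe := orthonormal_cross_frame_completeness (u := Real.sqrt 2 • A) hn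
    (by rw [smul_dotProduct, dotProduct_smul, hA, smul_smul, smul_eq_mul, ← sq, hsqrt2]; norm_num)
    (by rw [dotProduct_smul, hnA, smul_zero]) i j
  simp only [map_smul, Pi.smul_apply, smul_eq_mul] at hframe
  have hreal : 2 * (A i * A j + (n ⨯₃ A) i * (n ⨯₃ A) j) = (if i = j then 1 else 0) - n i * n j := by
    linear_combination hframe - (A i * A j + (n ⨯₃ A) i * (n ⨯₃ A) j) * hsqrt2
  have hcomplex := congrArg (fun x : ℝ => (x : ℂ)) hreal
  simp only [beltramiVector, map_neg, LinearMap.neg_apply, Pi.neg_apply]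
  push_cast [apply_ite Complex.ofReal] at hcomplex ⊢
  linear_combination hcomplex + (-2 * ((n ⨯₃ A) i : ℂ) * ((n ⨯₃ A) j : ℂ)) * Complex.I_sq

lemma mul_beltramiVector_add_mul_neg {lam : ℝ} (hlam : lam ≠ 0) {v A : Fin 3 → ℝ}
    (hv : v ⬝ᵥ v = lam ^ 2) (hA : A ⬝ᵥ A = 1 / 2) (hvA : v ⬝ᵥ A = 0) (α : ℂ) (i j : Fin 3) :
    α * beltramiVector (lam⁻¹ • v) A i * (starRingEnd ℂ α * beltramiVector (-(lam⁻¹ • v)) A j)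
        + starRingEnd ℂ α * beltramiVector (-(lam⁻¹ • v)) A i
          * (α * beltramiVector (lam⁻¹ • v) A j)
      = (‖α‖ ^ 2 : ℝ) * ((if i = j then 1 else 0) - ((v i * v j / lam ^ 2 : ℝ) : ℂ)) := by
  have hn : (lam⁻¹ • v) ⬝ᵥ (lam⁻¹ • v) = 1 := by
    rw [smul_dotProduct, dotProduct_smul, hv, smul_eq_mul, smul_eq_mul]
    field_simp
  have hnA : (lam⁻¹ • v) ⬝ᵥ A = 0 := by rw [smul_dotProduct, hvA, smul_zero]
  calc _ = α * starRingEnd ℂ α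
        * (beltramiVector (lam⁻¹ • v) A i * beltramiVector (-(lam⁻¹ • v)) A j
          + beltramiVector (-(lam⁻¹ • v)) A i * beltramiVector (lam⁻¹ • v) A j) := by ring
    _ = _ := by
      rw [Complex.mul_conj, Complex.normSq_eq_norm_sq, beltramiVector_mul_add_mul_neg hn hA hnA]
      simp only [Pi.smul_apply, smul_eq_mul]
      push_cast
      ring

theorem statement2
    (lam : ℝ) (hlam : 1 ≤ lam)
    (Λ : Finset (Fin 3 → ℤ))
    (hΛnorm : ∀ k ∈ Λ, Real.sqrt (∑ i, ((k i : ℝ)) ^ 2) = lam)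
    (hΛneg : ∀ k ∈ Λ, -k ∈ Λ)
    (A : (Fin 3 → ℤ) → (Fin 3 → ℝ))
    (hAk : ∀ k ∈ Λ, ∑ i, A k i * (k i : ℝ) = 0)
    (hAnorm : ∀ k ∈ Λ, Real.sqrt (∑ i, (A k i) ^ 2) = 1 / Real.sqrt 2)
    (hAneg : ∀ k ∈ Λ, A (-k) = A k)
    (B : (Fin 3 → ℤ) → (Fin 3 → ℂ))
    (hB : ∀ k ∈ Λ, ∀ i, B k i = (A k i : ℂ)
        + Complex.I * ((crossProduct (lam⁻¹ • fun j => ((k j : ℝ))) (A k)) i : ℝ))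
    (a : (Fin 3 → ℤ) → ℂ)
    (ha : ∀ k ∈ Λ, (starRingEnd ℂ) (a k) = a (-k))
    (W : (Fin 3 → ℝ) → (Fin 3 → ℂ))
    (hW : ∀ ξ i, W ξ i = ∑ k ∈ Λ,
        a k * B k i * Complex.exp (Complex.I * ((∑ j, (k j : ℝ) * ξ j : ℝ) : ℂ))) :
    ∀ i j : Fin 3,
      ((((2 * Real.pi) ^ 3)⁻¹ : ℝ) : ℂ)
          * ∫ ξ in Set.Icc (0 : Fin 3 → ℝ) (fun _ => 2 * Real.pi), W ξ i * W ξ j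
        = (1 / 2 : ℂ) * ∑ k ∈ Λ, (‖a k‖ ^ 2 : ℝ)
            * ((if i = j then 1 else 0) - (((k i : ℝ) * (k j : ℝ) / lam ^ 2 : ℝ) : ℂ)) := by
  intro i j
  let T : (Fin 3 → ℤ) → ℂ := fun k => a k * B k i * (a (-k) * B (-k) j)
  have hmode : ∀ k ∈ Λ, T k + T (-k) =
      (‖a k‖ ^ 2 : ℝ) * ((if i = j then 1 else 0) - (((k i : ℝ) * (k j : ℝ) / lam ^ 2 : ℝ) : ℂ)) := by
    intro k hk
    have hBneg : ∀ l, B (-k) l = beltramiVector (-(lam⁻¹ • fun j => (k j : ℝ))) (A k) l := by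
      intro l
      rw [hB (-k) (hΛneg k hk), hAneg k hk, show (fun j => (((-k) j : ℤ) : ℝ)) =
        -fun j => (k j : ℝ) by ext; simp, smul_neg, beltramiVector]
    simp only [T, neg_neg]
    rw [← ha k hk, hB k hk, hB k hk, hBneg, hBneg]
    refine mul_beltramiVector_add_mul_neg (by positivity)
      (dotProduct_self_eq_of_sqrt_eq (hΛnorm k hk)) ?_ ?_ (a k) i j
    · rw [dotProduct_self_eq_of_sqrt_eq (hAnorm k hk), div_pow, Real.sq_sqrt zero_le_two, one_pow]
    · rw [dotProduct_comm]
      exact hAk k hk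
  have hWchar : ∀ ξ l, W ξ l = ∑ k ∈ Λ, a k * B k l * torusChar k ξ := hW
  simp_rw [hWchar]
  rw [setIntegral_sum_mul_sum_torusChar hΛneg, Fintype.card_fin, ← mul_assoc,
    ← Complex.ofReal_mul, inv_mul_cancel₀ (by positivity), Complex.ofReal_one, one_mul,
    ← Finset.sum_congr rfl hmode, Finset.sum_add_distrib,
    Finset.sum_comp_neg_of_neg_mem hΛneg T]
  ring
end

section
/- If u solves Δu = v − (average of v) on the 3-torus with zero average, and Rv := (1/4)(∇Pu + (∇Pu)ᵀ) + (3/4)(∇u + (∇u)ᵀ) − (1/2)(div u) Id where P is the Leray projection, then Rv(x) is a symmetric trace-free matrix for every x, and div(Rv) = v − (average of v). -/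
open MeasureTheory

lemma pd_contDiff {g : (Fin 3 → ℝ) → ℝ} (hg : ContDiff ℝ (⊤ : ℕ∞) g) (w : Fin 3 → ℝ) :
    ContDiff ℝ (⊤ : ℕ∞) (fun x => fderiv ℝ g x w) :=
  (hg.fderiv_right (by simp)).clm_apply contDiff_const

lemma fderiv_pd {g : (Fin 3 → ℝ) → ℝ} (hg : ContDiff ℝ (⊤ : ℕ∞) g) (x v w : Fin 3 → ℝ) :
    fderiv ℝ (fun y => fderiv ℝ g y w) x v = fderiv ℝ (fderiv ℝ g) x v w := by
  have h1 : DifferentiableAt ℝ (fderiv ℝ g) x :=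
    ((hg.fderiv_right (m := (⊤ : ℕ∞)) (by simp)).differentiable (by simp)) x
  have h2 : fderiv ℝ (fun y => fderiv ℝ g y w) x
      = (ContinuousLinearMap.apply ℝ ℝ w).comp (fderiv ℝ (fderiv ℝ g) x) :=
    ((ContinuousLinearMap.apply ℝ ℝ w).hasFDerivAt.comp x h1.hasFDerivAt).fderiv
  rw [h2]; rfl

lemma schwarz {g : (Fin 3 → ℝ) → ℝ} (hg : ContDiff ℝ (⊤ : ℕ∞) g) (x v w : Fin 3 → ℝ) :
    fderiv ℝ (fun y => fderiv ℝ g y w) x v = fderiv ℝ (fun y => fderiv ℝ g y v) x w := by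
  rw [fderiv_pd hg, fderiv_pd hg]
  exact (hg.contDiffAt.isSymmSndFDerivAt (by rw [minSmoothness_of_isRCLikeNormedField]; exact WithTop.coe_le_coe.mpr le_top)) v w

lemma fderiv_combo {A B C D S : (Fin 3 → ℝ) → ℝ} {x : Fin 3 → ℝ}
    (hA : DifferentiableAt ℝ A x) (hB : DifferentiableAt ℝ B x)
    (hC : DifferentiableAt ℝ C x) (hD : DifferentiableAt ℝ D x)
    (hS : DifferentiableAt ℝ S x) (δ : ℝ) (w : Fin 3 → ℝ) :
    fderiv ℝ (fun y => 1/4*(A y + B y) + 3/4*(C y + D y) - 1/2*(S y)*δ) x w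
    = 1/4*(fderiv ℝ A x w + fderiv ℝ B x w) + 3/4*(fderiv ℝ C x w + fderiv ℝ D x w)
      - 1/2*(fderiv ℝ S x w)*δ := by
  have H := ((((hA.hasFDerivAt.add hB.hasFDerivAt).const_mul (1/4:ℝ)).add
      ((hC.hasFDerivAt.add hD.hasFDerivAt).const_mul (3/4:ℝ))).sub
      ((hS.hasFDerivAt.const_mul (1/2:ℝ)).mul_const δ)).fderiv
  have H' : fderiv ℝ (fun y => 1/4*(A y + B y) + 3/4*(C y + D y) - 1/2*(S y)*δ) x = _ := H
  rw [H']
  simp [ContinuousLinearMap.add_apply, ContinuousLinearMap.sub_apply,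
    ContinuousLinearMap.smul_apply, smul_eq_mul]
  ring

lemma fderiv_sub_apply {A B : (Fin 3 → ℝ) → ℝ} {x : Fin 3 → ℝ}
    (hA : DifferentiableAt ℝ A x) (hB : DifferentiableAt ℝ B x) (w : Fin 3 → ℝ) :
    fderiv ℝ (fun y => A y - B y) x w = fderiv ℝ A x w - fderiv ℝ B x w := by
  rw [fderiv_fun_sub hA hB]; rfl

lemma fderiv_sum_apply' {g : Fin 3 → (Fin 3 → ℝ) → ℝ} {x : Fin 3 → ℝ}
    (hg : ∀ j, DifferentiableAt ℝ (g j) x) (w : Fin 3 → ℝ) :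
    ∑ j, fderiv ℝ (g j) x w = fderiv ℝ (fun y => ∑ j, g j y) x w := by
  rw [fderiv_fun_sum (fun j _ => hg j)]
  simp [ContinuousLinearMap.sum_apply]

theorem statement4
    (v u Pu : (Fin 3 → ℝ) → (Fin 3 → ℝ)) (vavg : Fin 3 → ℝ)
    (hv : ContDiff ℝ (⊤ : ℕ∞) v) (hu : ContDiff ℝ (⊤ : ℕ∞) u) (hPu : ContDiff ℝ (⊤ : ℕ∞) Pu)
    (hvper : ∀ (x : Fin 3 → ℝ) (m : Fin 3 → ℤ), v (x + fun j => 2 * Real.pi * m j) = v x)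
    (huper : ∀ (x : Fin 3 → ℝ) (m : Fin 3 → ℤ), u (x + fun j => 2 * Real.pi * m j) = u x)
    (hPuper : ∀ (x : Fin 3 → ℝ) (m : Fin 3 → ℤ), Pu (x + fun j => 2 * Real.pi * m j) = Pu x)
    (havg : vavg = (((2 * Real.pi) ^ 3)⁻¹ : ℝ)
        • ∫ x in Set.Icc (0 : Fin 3 → ℝ) (fun _ => 2 * Real.pi), v x)
    -- u is the zero-average solution of Δu = v − avg v
    (hlap : ∀ (x : Fin 3 → ℝ) (i : Fin 3),
        ∑ j, fderiv ℝ (fun y => fderiv ℝ (fun z => u z i) y (Pi.single j 1)) x (Pi.single j 1)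
          = v x i - vavg i)
    (huavg : (∫ x in Set.Icc (0 : Fin 3 → ℝ) (fun _ => 2 * Real.pi), u x) = 0)
    -- Pu is the Leray projection of u: divergence-free, zero average, u − Pu a gradient
    (hPdiv : ∀ x : Fin 3 → ℝ, ∑ i, fderiv ℝ (fun z => Pu z i) x (Pi.single i 1) = 0)
    (hPavg : (∫ x in Set.Icc (0 : Fin 3 → ℝ) (fun _ => 2 * Real.pi), Pu x) = 0)
    (hgrad : ∃ φ : (Fin 3 → ℝ) → ℝ, ContDiff ℝ (⊤ : ℕ∞) φ ∧
        ∀ (x : Fin 3 → ℝ) (i : Fin 3), u x i - Pu x i = fderiv ℝ φ x (Pi.single i 1))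
    (R : (Fin 3 → ℝ) → Fin 3 → Fin 3 → ℝ)
    (hR : ∀ (x : Fin 3 → ℝ) (i j : Fin 3), R x i j
      = (1/4) * (fderiv ℝ (fun z => Pu z i) x (Pi.single j 1)
            + fderiv ℝ (fun z => Pu z j) x (Pi.single i 1))
        + (3/4) * (fderiv ℝ (fun z => u z i) x (Pi.single j 1)
            + fderiv ℝ (fun z => u z j) x (Pi.single i 1))
        - (1/2) * (∑ l, fderiv ℝ (fun z => u z l) x (Pi.single l 1))
            * (if i = j then 1 else 0)) :
    (∀ (x : Fin 3 → ℝ) (i j : Fin 3), R x i j = R x j i) ∧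
    (∀ x : Fin 3 → ℝ, ∑ i, R x i i = 0) ∧
    (∀ (x : Fin 3 → ℝ) (i : Fin 3),
        ∑ j, fderiv ℝ (fun y => R y i j) x (Pi.single j 1) = v x i - vavg i) := by
  have hui : ∀ k, ContDiff ℝ (⊤ : ℕ∞) (fun z => u z k) := fun k => contDiff_pi.mp hu k
  have hPui : ∀ k, ContDiff ℝ (⊤ : ℕ∞) (fun z => Pu z k) := fun k => contDiff_pi.mp hPu k
  have hduD : ∀ (k : Fin 3) (w : Fin 3 → ℝ) (y : Fin 3 → ℝ),
      DifferentiableAt ℝ (fun z => fderiv ℝ (fun z => u z k) z w) y :=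
    fun k w y => ((pd_contDiff (hui k) w).differentiable (by simp)) y
  have hdPuD : ∀ (k : Fin 3) (w : Fin 3 → ℝ) (y : Fin 3 → ℝ),
      DifferentiableAt ℝ (fun z => fderiv ℝ (fun z => Pu z k) z w) y :=
    fun k w y => ((pd_contDiff (hPui k) w).differentiable (by simp)) y
  have hSc : ContDiff ℝ (⊤ : ℕ∞) (fun y => ∑ l, fderiv ℝ (fun z => u z l) y (Pi.single l 1)) :=
    ContDiff.sum (fun l _ => pd_contDiff (hui l) _)
  have hSD : ∀ y, DifferentiableAt ℝ
      (fun y => ∑ l, fderiv ℝ (fun z => u z l) y (Pi.single l 1)) y :=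
    fun y => (hSc.differentiable (by simp)) y
  refine ⟨?_, ?_, ?_⟩
  · -- symmetry
    intro x i j
    rw [hR x i j, hR x j i]
    rcases eq_or_ne i j with h | h
    · subst h; ring
    · simp only [if_neg h, if_neg (Ne.symm h)]; ring
  · -- trace free
    intro x
    have hP := hPdiv x
    rw [Fin.sum_univ_three] at hP
    simp only [hR, Fin.sum_univ_three, if_true, eq_self_iff_true]
    linear_combination (1/2 : ℝ) * hP
  · -- divergence
    intro x i
    -- w functions
    obtain ⟨φ, hφ, hφeq⟩ := hgrad
    have hw : ∀ k, ContDiff ℝ (⊤ : ℕ∞) (fun z => u z k - Pu z k) := fun k => (hui k).sub (hPui k)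
    have hwD : ∀ (k : Fin 3) (w : Fin 3 → ℝ) (y : Fin 3 → ℝ),
        DifferentiableAt ℝ (fun z => fderiv ℝ (fun z' => u z' k - Pu z' k) z w) y :=
      fun k w y => ((pd_contDiff (hw k) w).differentiable (by simp)) y
    -- fderiv of w components
    have hwfd : ∀ (k : Fin 3) (y w' : Fin 3 → ℝ),
        fderiv ℝ (fun z => u z k - Pu z k) y w'
          = fderiv ℝ (fun z => u z k) y w' - fderiv ℝ (fun z => Pu z k) y w' :=
      fun k y w' => fderiv_sub_apply ((hui k).differentiable (by simp) y)
        ((hPui k).differentiable (by simp) y) w'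
    -- w_k = pd φ k as functions
    have hwphi : ∀ k : Fin 3, (fun z => u z k - Pu z k)
        = fun z => fderiv ℝ φ z (Pi.single k 1) := fun k => funext fun z => hφeq z k
    -- key PDE identity: Δ(Pu_i) + ∂_i div u = v - avg
    have hkey : (∑ j, fderiv ℝ (fun y => fderiv ℝ (fun z => Pu z i) y (Pi.single j 1))
            x (Pi.single j 1))
        + fderiv ℝ (fun y => ∑ l, fderiv ℝ (fun z => u z l) y (Pi.single l 1))
            x (Pi.single i 1)
        = v x i - vavg i := by
      have step1 : ∀ j : Fin 3,
          fderiv ℝ (fun y => fderiv ℝ (fun z => u z i) y (Pi.single j 1)) x (Pi.single j 1)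
          - fderiv ℝ (fun y => fderiv ℝ (fun z => Pu z i) y (Pi.single j 1)) x (Pi.single j 1)
          = fderiv ℝ (fun y => fderiv ℝ (fun z => u z j - Pu z j) y (Pi.single j 1))
              x (Pi.single i 1) := by
        intro j
        have e1 : (fun y => fderiv ℝ (fun z => u z i - Pu z i) y (Pi.single j 1))
            = fun y => fderiv ℝ (fun z => u z i) y (Pi.single j 1)
                - fderiv ℝ (fun z => Pu z i) y (Pi.single j 1) :=
          funext fun y => hwfd i y _
        have e2 : fderiv ℝ (fun y => fderiv ℝ (fun z => u z i) y (Pi.single j 1)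
              - fderiv ℝ (fun z => Pu z i) y (Pi.single j 1)) x (Pi.single j 1)
            = fderiv ℝ (fun y => fderiv ℝ (fun z => u z i) y (Pi.single j 1)) x (Pi.single j 1)
              - fderiv ℝ (fun y => fderiv ℝ (fun z => Pu z i) y (Pi.single j 1)) x (Pi.single j 1) :=
          fderiv_sub_apply (hduD i _ x) (hdPuD i _ x) _
        rw [← e2, ← e1]
        -- now swap: fderiv (fun y => fderiv w_i y e_j) x e_j = fderiv (fun y => fderiv w_j y e_j) x e_i
        have e3 : (fun y => fderiv ℝ (fun z => u z i - Pu z i) y (Pi.single j 1))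
            = fun y => fderiv ℝ (fun z => u z j - Pu z j) y (Pi.single i 1) := by
          funext y
          rw [hwphi i, hwphi j]
          exact schwarz hφ y _ _
        rw [e3]
        exact schwarz (hw j) x _ _
      have sum1 : ∑ j, (fderiv ℝ (fun y => fderiv ℝ (fun z => u z i) y (Pi.single j 1)) x (Pi.single j 1)
          - fderiv ℝ (fun y => fderiv ℝ (fun z => Pu z i) y (Pi.single j 1)) x (Pi.single j 1))
          = fderiv ℝ (fun y => ∑ j, fderiv ℝ (fun z => u z j - Pu z j) y (Pi.single j 1))
              x (Pi.single i 1) := by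
        rw [Finset.sum_congr rfl (fun j _ => step1 j)]
        exact fderiv_sum_apply' (fun j => hwD j _ x) _
      have e4 : (fun y => ∑ j, fderiv ℝ (fun z => u z j - Pu z j) y (Pi.single j 1))
          = fun y => ∑ l, fderiv ℝ (fun z => u z l) y (Pi.single l 1) := by
        funext y
        rw [Finset.sum_congr rfl (fun j _ => hwfd j y _), Finset.sum_sub_distrib, hPdiv y,
          sub_zero]
      rw [e4] at sum1
      rw [Finset.sum_sub_distrib, hlap x i] at sum1
      linarith [sum1]
    -- compute each fderiv of R
    have step : ∀ j : Fin 3,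
        fderiv ℝ (fun y => R y i j) x (Pi.single j 1)
        = 1/4*(fderiv ℝ (fun y => fderiv ℝ (fun z => Pu z i) y (Pi.single j 1)) x (Pi.single j 1)
            + fderiv ℝ (fun y => fderiv ℝ (fun z => Pu z j) y (Pi.single i 1)) x (Pi.single j 1))
          + 3/4*(fderiv ℝ (fun y => fderiv ℝ (fun z => u z i) y (Pi.single j 1)) x (Pi.single j 1)
            + fderiv ℝ (fun y => fderiv ℝ (fun z => u z j) y (Pi.single i 1)) x (Pi.single j 1))
          - 1/2*(fderiv ℝ (fun y => ∑ l, fderiv ℝ (fun z => u z l) y (Pi.single l 1))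
              x (Pi.single j 1))*(if i = j then 1 else 0) := by
      intro j
      have hfun : (fun y => R y i j)
          = fun y => 1/4*(fderiv ℝ (fun z => Pu z i) y (Pi.single j 1)
                + fderiv ℝ (fun z => Pu z j) y (Pi.single i 1))
            + 3/4*(fderiv ℝ (fun z => u z i) y (Pi.single j 1)
                + fderiv ℝ (fun z => u z j) y (Pi.single i 1))
            - 1/2*((∑ l, fderiv ℝ (fun z => u z l) y (Pi.single l 1)))*(if i = j then 1 else 0) :=
        funext fun y => hR y i j
      rw [hfun]
      exact fderiv_combo (hdPuD i _ x) (hdPuD j _ x) (hduD i _ x) (hduD j _ x) (hSD x) _ _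
    -- swap derivatives in the second members
    have swP : ∀ j : Fin 3,
        fderiv ℝ (fun y => fderiv ℝ (fun z => Pu z j) y (Pi.single i 1)) x (Pi.single j 1)
        = fderiv ℝ (fun y => fderiv ℝ (fun z => Pu z j) y (Pi.single j 1)) x (Pi.single i 1) :=
      fun j => schwarz (hPui j) x _ _
    have swU : ∀ j : Fin 3,
        fderiv ℝ (fun y => fderiv ℝ (fun z => u z j) y (Pi.single i 1)) x (Pi.single j 1)
        = fderiv ℝ (fun y => fderiv ℝ (fun z => u z j) y (Pi.single j 1)) x (Pi.single i 1) :=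
      fun j => schwarz (hui j) x _ _
    have step2 : ∀ j : Fin 3,
        fderiv ℝ (fun y => R y i j) x (Pi.single j 1)
        = 1/4*(fderiv ℝ (fun y => fderiv ℝ (fun z => Pu z i) y (Pi.single j 1)) x (Pi.single j 1))
          + 1/4*(fderiv ℝ (fun y => fderiv ℝ (fun z => Pu z j) y (Pi.single j 1)) x (Pi.single i 1))
          + (3/4*(fderiv ℝ (fun y => fderiv ℝ (fun z => u z i) y (Pi.single j 1)) x (Pi.single j 1))
          + 3/4*(fderiv ℝ (fun y => fderiv ℝ (fun z => u z j) y (Pi.single j 1)) x (Pi.single i 1)))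
          - (if i = j then
              1/2*(fderiv ℝ (fun y => ∑ l, fderiv ℝ (fun z => u z l) y (Pi.single l 1))
                x (Pi.single j 1)) else 0) := by
      intro j
      rw [step j, swP j, swU j]
      split_ifs <;> ring
    have sumP : ∑ j, fderiv ℝ (fun y => fderiv ℝ (fun z => Pu z j) y (Pi.single j 1)) x
        (Pi.single i 1) = 0 := by
      rw [fderiv_sum_apply' (fun j => hdPuD j _ x) _]
      have : (fun y => ∑ j, fderiv ℝ (fun z => Pu z j) y (Pi.single j 1)) = fun _ => (0:ℝ) :=
        funext fun y => hPdiv y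
      rw [this, fderiv_fun_const]
      rfl
    have sumU : ∑ j, fderiv ℝ (fun y => fderiv ℝ (fun z => u z j) y (Pi.single j 1)) x
        (Pi.single i 1)
        = fderiv ℝ (fun y => ∑ l, fderiv ℝ (fun z => u z l) y (Pi.single l 1)) x (Pi.single i 1) :=
      fderiv_sum_apply' (fun j => hduD j _ x) _
    rw [Finset.sum_congr rfl (fun j _ => step2 j)]
    simp only [Finset.sum_sub_distrib, Finset.sum_add_distrib, Finset.sum_ite_eq,
      Finset.mem_univ, if_true, ← Finset.mul_sum]
    rw [sumP, sumU, hlap x i]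
    linarith [hkey]
end
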